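/- Consider the semidefinite program: maximize (1/2)·[(1/2)⟨φ₀|σ₀^{BC}|φ₀⟩ + (1/2)⟨φ₁|σ₁^{BC}|φ₁⟩] + (1/2)·⟨σ^{OT}, P_accept⟩ over density matrices σ₀^{BC}, σ₁^{BC} on ℂ³ ⊗ ℂ³, σ^{OT} on (ℂ²)^{⊗4}, and σ_B on ℂ³, subject to: Tr_A(σ₀^{BC}) = Tr_A(σ₁^{BC}) = σ_B, and Tr_{G₀,G₁}(σ^{OT}) = Tr_B(U₂(|ψ⟩⟨ψ| ⊗ σ_B)U₂†), where |ψ⟩ = (1/2)Σ_{x₀,x₁}|x₀x₁⟩, U₂ = Σ_{x₀,x₁}|x₀x₁⟩⟨x₀x₁| ⊗ diag((−1)^{x₀},(−1)^{x₁},1), and P_accept = Σ_{x₀,x₁}|x₀x₁⟩⟨x₀x₁| ⊗ |x₀x₁⟩⟨x₀x₁|. Its optimal value v satisfies 0.7285 ≤ v ≤ 0.7286; in particular v < 3/4, i.e., Alice's optimal cheating probability in the stochastic bit-commitment/oblivious-transfer switch protocol is strictly smaller than her optimal cheating probability (3/4) in either constituent protocol. -/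

import Mathlib

open Matrix
open scoped Matrix BigOperators ComplexOrder

noncomputable section

/-- Square matrices over ℂ indexed by `α`. -/
abbrev Mat (α : Type) : Type := Matrix α α ℂ

/-- A density matrix: positive semidefinite with unit trace. -/
def IsDensity {α : Type} [Fintype α] [DecidableEq α] (ρ : Mat α) : Prop :=
  ρ.PosSemidef ∧ ρ.trace = 1

/-- Hilbert–Schmidt inner product ⟨P, Q⟩ = Tr(P† Q). -/
def hs {α : Type} [Fintype α] (P Q : Mat α) : ℂ := (Pᴴ * Q).trace

/-- Outer product |v⟩⟨v|. -/
def outer {α : Type} (v : α → ℂ) : Mat α := fun i j => v i * star (v j)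

/-- Standard basis vector |i⟩. -/
def ket {α : Type} [DecidableEq α] (i : α) : α → ℂ := fun j => if j = i then 1 else 0

/-- The embedding of Fin 2 into Fin 3. -/
def f23 (y : Fin 2) : Fin 3 := ⟨y.val, by omega⟩

/-- |φ_y⟩ = (|yy⟩ + |22⟩)/√2 ∈ ℂ³ ⊗ ℂ³. -/
def phi (y : Fin 2) : Fin 3 × Fin 3 → ℂ :=
  fun p => (ket (f23 y, f23 y) p + ket ((2 : Fin 3), (2 : Fin 3)) p) / (Real.sqrt 2 : ℂ)

/-- Partial trace over the first tensor factor. -/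
def ptrA {α β : Type} [Fintype α] (ρ : Mat (α × β)) : Mat β :=
  fun b b' => ∑ a, ρ (a, b) (a, b')

/-- |ψ⟩ = (1/2) Σ_{x₀,x₁} |x₀x₁⟩ ∈ X₀ ⊗ X₁. -/
def psiX : Fin 2 × Fin 2 → ℂ := fun _ => 1/2

/-- U_{x₀x₁} = diag((−1)^{x₀}, (−1)^{x₁}, 1) as a diagonal entry function. -/
def Udiag (x0 x1 : Fin 2) (b : Fin 3) : ℂ :=
  if b = 0 then (-1) ^ (x0 : ℕ) else if b = 1 then (-1) ^ (x1 : ℕ) else 1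

/-- U₂ = Σ_{x₀,x₁} |x₀x₁⟩⟨x₀x₁| ⊗ U_{x₀x₁}, acting on X₀ ⊗ X₁ ⊗ B. -/
def U2 : Mat (Fin 2 × Fin 2 × Fin 3) :=
  Matrix.diagonal fun p => Udiag p.1 p.2.1 p.2.2

/-- The state |ψ⟩⟨ψ| ⊗ σ_B on X₀ ⊗ X₁ ⊗ B. -/
def inState (σB : Mat (Fin 3)) : Mat (Fin 2 × Fin 2 × Fin 3) :=
  fun p q => outer psiX (p.1, p.2.1) (q.1, q.2.1) * σB p.2.2 q.2.2

/-- Partial trace over B, the last factor of X₀ ⊗ X₁ ⊗ B. -/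
def trB (ρ : Mat (Fin 2 × Fin 2 × Fin 3)) : Mat (Fin 2 × Fin 2) :=
  fun p q => ∑ b, ρ (p.1, p.2, b) (q.1, q.2, b)

/-- Partial trace over G₀ and G₁, the last two factors of X₀ ⊗ X₁ ⊗ G₀ ⊗ G₁. -/
def trG01 (σ : Mat (Fin 2 × Fin 2 × Fin 2 × Fin 2)) : Mat (Fin 2 × Fin 2) :=
  fun p q => ∑ g0, ∑ g1, σ (p.1, p.2, g0, g1) (q.1, q.2, g0, g1)

/-- P_accept = Σ_{x₀,x₁} |x₀x₁⟩⟨x₀x₁|_{X₀⊗X₁} ⊗ |x₀x₁⟩⟨x₀x₁|_{G₀⊗G₁}. -/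
def Pacc : Mat (Fin 2 × Fin 2 × Fin 2 × Fin 2) := fun p q =>
  match p, q with
  | (x0, x1, g0, g1), (x0', x1', g0', g1') =>
    ∑ u0 : Fin 2, ∑ u1 : Fin 2,
      ket (u0, u1) (x0, x1) * star (ket (u0, u1) (x0', x1')) *
      (ket (u0, u1) (g0, g1) * star (ket (u0, u1) (g0', g1')))

/-- The constraint Tr_{G₀,G₁}(σ) = Tr_B(U₂(|ψ⟩⟨ψ| ⊗ σ_B)U₂†). -/
def OTconstraint (σ : Mat (Fin 2 × Fin 2 × Fin 2 × Fin 2)) (σB : Mat (Fin 3)) : Prop :=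
  trG01 σ = trB (U2 * inState σB * U2ᴴ)

/-!
The optimal value is `v = (3 + 2√2)/8`.

Upper bound, by weak duality. Take diagonal `Z₀, Z₁` on `B` and `Y` on `X₀X₁` with
`Z₀ + Z₁ + Φ*(Y) = v • 1`, where `Φ(σ_B) = Tr_B(U₂(|ψ⟩⟨ψ| ⊗ σ_B)U₂†)`. The slacks
`1 ⊗ Z_y - ¼|φ_y⟩⟨φ_y|` are positive semidefinite, which bounds the bit-commitment terms by
`Tr(Z_y σ_B)`. The slack `Y ⊗ 1 - ½ P_accept` is block diagonal over `G₀G₁` but not positive.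
However `χ = Σ (-1)^(x₀+x₁) |x₀x₁⟩` is orthogonal to every column `b ↦ U_{x₀x₁}(b)`, so
`⟨χ|Φ(σ_B)|χ⟩ = 0` and every block `⟨g|σ^OT|g⟩` annihilates `χ`. Each block of the slack is a
sum of two squares plus a term `χρᵀ + ρχᵀ`, which vanishes against such blocks.

Lower bound: an explicit feasible point attains `v`.
-/

open scoped Kronecker

lemma ofReal_sqrt_two_sq : (√2 : ℂ) ^ 2 = 2 := by
  rw [← Complex.ofReal_pow, Real.sq_sqrt zero_le_two, Complex.ofReal_ofNat]

section Outer

variable {α : Type} [Fintype α]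

lemma posSemidef_outer (v : α → ℂ) : (outer v).PosSemidef :=
  posSemidef_vecMulVec_self_star v

lemma trace_outer_mul (v : α → ℂ) (M : Mat α) : (outer v * M).trace = star v ⬝ᵥ (M *ᵥ v) := by
  simp only [trace, diag, mul_apply, outer, dotProduct, mulVec, Pi.star_apply, Finset.mul_sum]
  rw [Finset.sum_comm]
  exact Finset.sum_congr rfl fun _ _ => Finset.sum_congr rfl fun _ _ => by ring

lemma hs_outer (v : α → ℂ) (M : Mat α) : hs (outer v) M = (outer v * M).trace := by
  rw [hs, (posSemidef_outer v).isHermitian.eq]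

lemma trace_outer (v : α → ℂ) : (outer v).trace = star v ⬝ᵥ v := by
  simp only [trace, diag, outer, dotProduct, Pi.star_apply, mul_comm]

end Outer

section Trace

variable {𝕜 α : Type*} [RCLike 𝕜] [Fintype α]

open scoped MatrixOrder in
lemma trace_mul_nonneg {A B : Matrix α α 𝕜} (hA : A.PosSemidef) (hB : B.PosSemidef) :
    0 ≤ (A * B).trace := by
  classical
  obtain ⟨C, rfl⟩ := CStarAlgebra.nonneg_iff_eq_star_mul_self.mp hA.nonneg
  rw [star_eq_conjTranspose, Matrix.mul_assoc, trace_mul_comm]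
  exact (hB.mul_mul_conjTranspose_same C).trace_nonneg

lemma trace_mul_le_of_posSemidef_sub {A B ρ : Matrix α α 𝕜} (h : (A - B).PosSemidef)
    (hρ : ρ.PosSemidef) : (B * ρ).trace ≤ (A * ρ).trace := by
  simpa [Matrix.sub_mul, trace_sub] using trace_mul_nonneg h hρ

lemma trace_vecMulVec_add_mul_eq_zero {τ : Matrix α α 𝕜} (hτ : τ.IsHermitian) {m : α → 𝕜}
    (hm : star m = m) (hτm : τ *ᵥ m = 0) (ρ : α → 𝕜) :
    ((vecMulVec m ρ + vecMulVec ρ m) * τ).trace = 0 := by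
  have hmτ : m ᵥ* τ = 0 := by
    rw [← star_star m, ← hτ.eq, ← star_mulVec, hm, hτm, star_zero]
  rw [add_mul, trace_add, vecMulVec_mul, vecMulVec_mul, trace_vecMulVec, trace_vecMulVec, hmτ,
    dotProduct_zero, dotProduct_comm, ← dotProduct_mulVec, hτm, dotProduct_zero, add_zero]

lemma trace_conj_mul {β : Type*} [Fintype β] (J : Matrix α β 𝕜) (A : Matrix β β 𝕜)
    (σ : Matrix α α 𝕜) : (J * A * Jᴴ * σ).trace = (A * (Jᴴ * σ * J)).trace := by
  rw [Matrix.mul_assoc, Matrix.mul_assoc, trace_mul_comm, Matrix.mul_assoc, Matrix.mul_assoc]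

end Trace

lemma trace_one_kronecker_mul {α β : Type} [Fintype α] [Fintype β] [DecidableEq α]
    (Z : Mat β) (σ : Mat (α × β)) : ((1 ⊗ₖ Z) * σ).trace = (Z * ptrA σ).trace := by
  simp only [trace, diag_apply, mul_apply, kroneckerMap_apply, one_apply, ite_mul, one_mul,
    zero_mul, Fintype.sum_prod_type, Finset.sum_ite_irrel, Finset.sum_const_zero, Finset.sum_ite_eq,
    Finset.mem_univ, if_true, ptrA, Finset.mul_sum]
  rw [Finset.sum_comm]
  refine Finset.sum_congr rfl fun _ _ => ?_
  rw [Finset.sum_comm]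

section BitCommitment

def bcDualDiag (y : Fin 2) (b : Fin 3) : ℝ :=
  if b = f23 y then (1 + √2) / 8 else if b = 2 then (2 + √2) / 16 else 0

lemma bcDualDiag_nonneg (y : Fin 2) (b : Fin 3) : 0 ≤ bcDualDiag y b := by
  unfold bcDualDiag
  split_ifs <;> positivity

def bcDual (y : Fin 2) : Mat (Fin 3) := diagonal fun b => (bcDualDiag y b : ℂ)

def bcSlackVec (y : Fin 2) : Fin 3 × Fin 3 → ℂ :=
  ket (f23 y, f23 y) - (√2 / 2 : ℂ) • ket (2, 2)

set_option maxHeartbeats 1000000 in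
lemma one_kronecker_bcDual_sub (y : Fin 2) :
    1 ⊗ₖ bcDual y - (4⁻¹ : ℂ) • outer (phi y) =
      ((√2 / 8 : ℝ) : ℂ) • outer (bcSlackVec y) +
        diagonal fun p => if p.1 = p.2 then 0 else (bcDualDiag y p.2 : ℂ) := by
  ext ⟨a, b⟩ ⟨a', b'⟩
  fin_cases y <;> fin_cases a <;> fin_cases b <;> fin_cases a' <;> fin_cases b' <;>
    simp [bcDual, bcDualDiag, bcSlackVec, phi, outer, ket, f23, one_apply] <;>
    grind [ofReal_sqrt_two_sq]

lemma quarter_hs_phi_le (y : Fin 2) {σ : Mat (Fin 3 × Fin 3)} (hσ : σ.PosSemidef) :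
    4⁻¹ * hs (outer (phi y)) σ ≤ (bcDual y * ptrA σ).trace := by
  have hslack : (1 ⊗ₖ bcDual y - (4⁻¹ : ℂ) • outer (phi y)).PosSemidef := by
    rw [one_kronecker_bcDual_sub]
    refine ((posSemidef_outer _).smul (by positivity)).add (PosSemidef.diagonal fun p => ?_)
    split_ifs
    · exact le_rfl
    · exact Complex.zero_le_real.mpr (bcDualDiag_nonneg y p.2)
  have := trace_mul_le_of_posSemidef_sub hslack hσ
  rwa [smul_mul, trace_smul, trace_one_kronecker_mul, ← hs_outer] at this

end BitCommitment

section ObliviousTransfer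

abbrev X2 : Type := Fin 2 × Fin 2

abbrev XG : Type := Fin 2 × Fin 2 × Fin 2 × Fin 2

def blockEmb (g : X2) : Matrix XG X2 ℂ :=
  of fun p x => if p = (x.1, x.2, g.1, g.2) then 1 else 0

lemma trG01_eq_sum (σ : Mat XG) : trG01 σ = ∑ g, (blockEmb g)ᴴ * σ * blockEmb g := by
  ext x y
  simp [trG01, blockEmb, mul_apply, Matrix.sum_apply, Fintype.sum_prod_type, conjTranspose_apply]

lemma Pacc_eq_sum : Pacc = ∑ g, blockEmb g * outer (ket g) * (blockEmb g)ᴴ := by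
  ext ⟨x0, x1, g0, g1⟩ ⟨y0, y1, h0, h1⟩
  simp [Pacc, blockEmb, outer, ket, mul_apply, Matrix.sum_apply, Fintype.sum_prod_type,
    conjTranspose_apply]
  fin_cases x0 <;> fin_cases x1 <;> fin_cases g0 <;> fin_cases g1 <;> fin_cases y0 <;>
    fin_cases y1 <;> fin_cases h0 <;> fin_cases h1 <;> simp

def sgn (i : Fin 2) : ℂ := (-1) ^ (i : ℕ)

def chi (x : X2) : ℂ := sgn x.1 * sgn x.2

lemma star_chi : star chi = chi := by
  ext ⟨x0, x1⟩
  simp [chi, sgn]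

def otChannel (σB : Mat (Fin 3)) : Mat X2 := trB (U2 * inState σB * U2ᴴ)

lemma U2_conjTranspose : U2ᴴ = U2 := by
  rw [U2, diagonal_conjTranspose]
  congr 1
  ext ⟨x0, x1, b⟩
  simp only [Pi.star_apply, Udiag]
  split_ifs <;> simp

lemma otChannel_apply (σB : Mat (Fin 3)) (x y : X2) :
    otChannel σB x y = 4⁻¹ * ∑ b, Udiag x.1 x.2 b * Udiag y.1 y.2 b * σB b b := by
  rw [otChannel, U2_conjTranspose]
  simp only [trB, U2, mul_diagonal, diagonal_mul, inState, outer, psiX, one_div, star_inv₀,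
    star_ofNat, Finset.mul_sum]
  exact Finset.sum_congr rfl fun _ _ => by ring

-- `∑ x, χ x * U_x(b) = 0` for every `b`.
lemma chi_dotProduct_otChannel_mulVec_chi (σB : Mat (Fin 3)) :
    star chi ⬝ᵥ (otChannel σB *ᵥ chi) = 0 := by
  simp [dotProduct, mulVec, otChannel_apply, chi, sgn, Udiag, Fintype.sum_prod_type,
    Fin.sum_univ_three]
  ring

lemma blockEmb_mulVec_chi_eq_zero {σ : Mat XG} {σB : Mat (Fin 3)} (hσ : σ.PosSemidef)
    (hc : OTconstraint σ σB) (g : X2) : ((blockEmb g)ᴴ * σ * blockEmb g) *ᵥ chi = 0 := by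
  have hblock (g : X2) := hσ.conjTranspose_mul_mul_same (blockEmb g)
  have hsum : ∑ g, star chi ⬝ᵥ (((blockEmb g)ᴴ * σ * blockEmb g) *ᵥ chi) = 0 := by
    rw [← dotProduct_sum, ← sum_mulVec, ← trG01_eq_sum, show trG01 σ = otChannel σB from hc,
      chi_dotProduct_otChannel_mulVec_chi]
  rw [Finset.sum_eq_zero_iff_of_nonneg fun g _ => (hblock g).dotProduct_mulVec_nonneg chi] at hsum
  exact ((hblock g).dotProduct_mulVec_zero_iff chi).mp (hsum g (Finset.mem_univ g))

def otDual : Mat X2 :=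
  of fun x y => ((1 + √2) / 8 + (2 + √2) / 8 * (sgn x.1 * sgn y.1) +
    (2 + √2) / 8 * (sgn x.2 * sgn y.2)) / 4

def otSlackVec₁ (g x : X2) : ℂ := (sgn x.1 * sgn g.1 - sgn x.2 * sgn g.2) / 2

def otSlackVec₂ (g x : X2) : ℂ := 1 - √2 / 2 * (sgn x.1 * sgn g.1 + sgn x.2 * sgn g.2)

def chiPartner (g x : X2) : ℂ := chi x / 64 - chi g / 8 * ket g x

set_option maxHeartbeats 1000000 in
lemma otDual_sub_eq (g : X2) :
    otDual - ((2⁻¹ : ℂ) • outer (ket g) +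
        (vecMulVec chi (chiPartner g) + vecMulVec (chiPartner g) chi)) =
      (((2 + √2) / 16 : ℝ) : ℂ) • outer (otSlackVec₁ g) +
        ((√2 / 32 : ℝ) : ℂ) • outer (otSlackVec₂ g) := by
  ext ⟨x0, x1⟩ ⟨y0, y1⟩
  obtain ⟨g0, g1⟩ := g
  fin_cases g0 <;> fin_cases g1 <;> fin_cases x0 <;> fin_cases x1 <;> fin_cases y0 <;>
    fin_cases y1 <;>
    simp [otDual, otSlackVec₁, otSlackVec₂, chiPartner, chi, sgn, outer, ket, vecMulVec_apply] <;>
    grind [ofReal_sqrt_two_sq]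

lemma half_trace_ket_mul_le (g : X2) {τ : Mat X2} (hτ : τ.PosSemidef) (hτχ : τ *ᵥ chi = 0) :
    2⁻¹ * (outer (ket g) * τ).trace ≤ (otDual * τ).trace := by
  have hslack : (otDual - ((2⁻¹ : ℂ) • outer (ket g) +
      (vecMulVec chi (chiPartner g) + vecMulVec (chiPartner g) chi))).PosSemidef := by
    rw [otDual_sub_eq]
    exact ((posSemidef_outer _).smul (by positivity)).add
      ((posSemidef_outer _).smul (by positivity))
  have := trace_mul_le_of_posSemidef_sub hslack hτ
  rwa [add_mul, trace_add, trace_vecMulVec_add_mul_eq_zero hτ.isHermitian star_chi hτχ,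
    add_zero, smul_mul, trace_smul, smul_eq_mul] at this

def otDualPullback : Mat (Fin 3) := diagonal ![(2 + √2) / 8, (2 + √2) / 8, (1 + √2) / 8]

lemma trace_otDual_mul_otChannel (σB : Mat (Fin 3)) :
    (otDual * otChannel σB).trace = (otDualPullback * σB).trace := by
  simp [trace, mul_apply, otChannel_apply, otDual, otDualPullback, sgn, Udiag,
    Fintype.sum_prod_type, Fin.sum_univ_three]
  ring

lemma half_hs_Pacc_le {σ : Mat XG} {σB : Mat (Fin 3)} (hσ : σ.PosSemidef)
    (hc : OTconstraint σ σB) : 2⁻¹ * hs σ Pacc ≤ (otDualPullback * σB).trace := by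
  have hblock (g : X2) := hσ.conjTranspose_mul_mul_same (blockEmb g)
  calc 2⁻¹ * hs σ Pacc
      = ∑ g, 2⁻¹ * (outer (ket g) * ((blockEmb g)ᴴ * σ * blockEmb g)).trace := by
        rw [hs, hσ.isHermitian.eq, trace_mul_comm, Pacc_eq_sum, Finset.sum_mul, trace_sum,
          Finset.mul_sum]
        simp only [trace_conj_mul]
    _ ≤ ∑ g, (otDual * ((blockEmb g)ᴴ * σ * blockEmb g)).trace :=
        Finset.sum_le_sum fun g _ =>
          half_trace_ket_mul_le g (hblock g) (blockEmb_mulVec_chi_eq_zero hσ hc g)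
    _ = (otDualPullback * σB).trace := by
        rw [← trace_sum, ← Finset.mul_sum, ← trG01_eq_sum, show trG01 σ = otChannel σB from hc,
          trace_otDual_mul_otChannel]

end ObliviousTransfer

def optValue : ℝ := (3 + 2 * √2) / 8

lemma le_optValue : (0.7285 : ℝ) ≤ optValue := by
  rw [optValue]
  nlinarith [Real.sq_sqrt (zero_le_two : (0 : ℝ) ≤ 2), Real.sqrt_nonneg 2]

lemma optValue_le : optValue ≤ (0.7286 : ℝ) := by
  rw [optValue]
  nlinarith [Real.sq_sqrt (zero_le_two : (0 : ℝ) ≤ 2), Real.sqrt_nonneg 2]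

lemma bcDual_add_bcDual_add_otDualPullback :
    bcDual 0 + bcDual 1 + otDualPullback = (optValue : ℂ) • 1 := by
  ext b b'
  fin_cases b <;> fin_cases b' <;>
    simp [bcDual, bcDualDiag, otDualPullback, optValue, f23, one_apply] <;> ring

def objective (σ0 σ1 : Mat (Fin 3 × Fin 3)) (σOT : Mat XG) : ℂ :=
  (1/2 : ℂ) * ((1/2 : ℂ) * hs (outer (phi 0)) σ0 + (1/2 : ℂ) * hs (outer (phi 1)) σ1)
    + (1/2 : ℂ) * hs σOT Pacc

lemma objective_le {σ0 σ1 : Mat (Fin 3 × Fin 3)} {σOT : Mat XG} {σB : Mat (Fin 3)}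
    (h0 : σ0.PosSemidef) (h1 : σ1.PosSemidef) (hOT : σOT.PosSemidef) (hB : σB.trace = 1)
    (hp0 : ptrA σ0 = σB) (hp1 : ptrA σ1 = σB) (hc : OTconstraint σOT σB) :
    (objective σ0 σ1 σOT).re ≤ optValue := by
  have hbc0 := quarter_hs_phi_le 0 h0
  have hbc1 := quarter_hs_phi_le 1 h1
  rw [hp0] at hbc0
  rw [hp1] at hbc1
  have hdual :
      (bcDual 0 * σB).trace + (bcDual 1 * σB).trace + (otDualPullback * σB).trace = optValue := by
    rw [← trace_add, ← trace_add, ← add_mul, ← add_mul, bcDual_add_bcDual_add_otDualPullback,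
      smul_mul, one_mul, trace_smul, hB, smul_eq_mul, mul_one]
  have hle : objective σ0 σ1 σOT ≤ optValue :=
    calc objective σ0 σ1 σOT
        = 4⁻¹ * hs (outer (phi 0)) σ0 + 4⁻¹ * hs (outer (phi 1)) σ1 + 2⁻¹ * hs σOT Pacc := by
          rw [objective]; ring
      _ ≤ _ := add_le_add (add_le_add hbc0 hbc1) (half_hs_Pacc_le hOT hc)
      _ = optValue := hdual
  simpa using (Complex.le_def.mp hle).1

def primalB : Mat (Fin 3) := diagonal ![4⁻¹, 4⁻¹, 2⁻¹]

def primalBCVec (y : Fin 2) : Fin 3 × Fin 3 → ℂ :=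
  (2⁻¹ : ℂ) • ket (f23 y, f23 y) + (√2 / 2 : ℂ) • ket (2, 2)

def primalBC (y : Fin 2) : Mat (Fin 3 × Fin 3) :=
  outer (primalBCVec y) + (4⁻¹ : ℂ) • outer (ket (f23 (1 - y), f23 (1 - y)))

def primalOTVec (p : XG) : ℂ := (√2 + sgn p.1 * sgn p.2.2.1 + sgn p.2.1 * sgn p.2.2.2) / 8

def primalOT : Mat XG := outer primalOTVec

lemma isDensity_primalB : IsDensity primalB := by
  refine ⟨PosSemidef.diagonal fun b => ?_, ?_⟩
  · fin_cases b <;> simp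
  · simp only [primalB, trace_diagonal, Fin.sum_univ_three, cons_val_zero, cons_val_one, cons_val]
    norm_num

lemma isDensity_primalBC (y : Fin 2) : IsDensity (primalBC y) := by
  refine ⟨(posSemidef_outer _).add ((posSemidef_outer _).smul (by positivity)), ?_⟩
  rw [primalBC, trace_add, trace_smul, trace_outer, trace_outer]
  fin_cases y <;>
    simp [primalBCVec, ket, f23, map_ofNat, dotProduct, Fintype.sum_prod_type,
      Fin.sum_univ_three] <;>
    grind [ofReal_sqrt_two_sq]

lemma isDensity_primalOT : IsDensity primalOT := by
  refine ⟨posSemidef_outer _, ?_⟩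
  rw [primalOT, trace_outer]
  simp [primalOTVec, sgn, dotProduct, Fintype.sum_prod_type]
  grind [ofReal_sqrt_two_sq]

lemma ptrA_primalBC (y : Fin 2) : ptrA (primalBC y) = primalB := by
  ext b b'
  fin_cases y <;> fin_cases b <;> fin_cases b' <;>
    simp [ptrA, primalBC, primalBCVec, primalB, outer, ket, f23, map_ofNat] <;>
    grind [ofReal_sqrt_two_sq]

lemma otConstraint_primal : OTconstraint primalOT primalB := by
  show trG01 primalOT = otChannel primalB
  ext ⟨x0, x1⟩ ⟨y0, y1⟩
  fin_cases x0 <;> fin_cases x1 <;> fin_cases y0 <;> fin_cases y1 <;>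
    simp [trG01, otChannel_apply, primalOT, primalOTVec, primalB, outer, sgn, Udiag,
      Fin.sum_univ_three] <;>
    grind [ofReal_sqrt_two_sq]

lemma hs_phi_primalBC (y : Fin 2) : hs (outer (phi y)) (primalBC y) = optValue := by
  rw [hs_outer, trace_outer_mul]
  fin_cases y <;>
    simp [phi, primalBC, primalBCVec, optValue, outer, ket, f23, map_ofNat, dotProduct, mulVec,
      Fintype.sum_prod_type, Fin.sum_univ_three] <;>
    grind [ofReal_sqrt_two_sq]

lemma hs_primalOT_Pacc : hs primalOT Pacc = optValue := by
  rw [primalOT, hs_outer, trace_outer_mul]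
  simp [Pacc, primalOTVec, optValue, sgn, ket, dotProduct, mulVec, Fintype.sum_prod_type]
  grind [ofReal_sqrt_two_sq]

lemma objective_primal : (objective (primalBC 0) (primalBC 1) primalOT).re = optValue := by
  have h : objective (primalBC 0) (primalBC 1) primalOT = optValue := by
    rw [objective, hs_phi_primalBC, hs_phi_primalBC, hs_primalOT_Pacc]
    ring
  rw [h, Complex.ofReal_re]

theorem bc_ot_switch_cheating_Alice :
    ∃ v : ℝ,
      IsLUB
        {x : ℝ | ∃ (σ0 σ1 : Mat (Fin 3 × Fin 3))
            (σOT : Mat (Fin 2 × Fin 2 × Fin 2 × Fin 2)) (σB : Mat (Fin 3)),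
          IsDensity σ0 ∧ IsDensity σ1 ∧ IsDensity σOT ∧ IsDensity σB ∧
          ptrA σ0 = σB ∧ ptrA σ1 = σB ∧ OTconstraint σOT σB ∧
          x = ((1/2 : ℂ) * ((1/2 : ℂ) * hs (outer (phi 0)) σ0
                + (1/2 : ℂ) * hs (outer (phi 1)) σ1)
              + (1/2 : ℂ) * hs σOT Pacc).re}
        v
      ∧ (0.7285 : ℝ) ≤ v ∧ v ≤ (0.7286 : ℝ) ∧ v < 3/4 := by
  refine ⟨optValue, IsGreatest.isLUB ⟨?_, ?_⟩, le_optValue, optValue_le,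
    optValue_le.trans_lt (by norm_num)⟩
  · exact ⟨primalBC 0, primalBC 1, primalOT, primalB, isDensity_primalBC 0, isDensity_primalBC 1,
      isDensity_primalOT, isDensity_primalB, ptrA_primalBC 0, ptrA_primalBC 1,
      otConstraint_primal, objective_primal.symm⟩
  · rintro x ⟨σ0, σ1, σOT, σB, h0, h1, hOT, hB, hp0, hp1, hc, rfl⟩
    exact objective_le h0.1 h1.1 hOT.1 hB.2 hp0 hp1 hc
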